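/- arXiv:2510.01059 — 5 statements merged into one kernel-verified Lean document; each statement's English description precedes it below -/
import Mathlib

section
/- Let α : ℝ → ℝ be strictly increasing with α(0) = 0 and α(r) < r for all r > 0. Let (a_k)_{k≥0} be a real sequence with a_0 ≥ 0 and, for all k ≥ 0, a_{k+1} − a_k + α(a_k) ≥ 0. Then a_k ≥ 0 for all k ≥ 0. -/
theorem dtcbf_classK_invariance
    (α : ℝ → ℝ) (hmono : StrictMono α) (h0 : α 0 = 0)
    (hlt : ∀ r : ℝ, 0 < r → α r < r)
    (a : ℕ → ℝ) (ha0 : 0 ≤ a 0)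
    (hstep : ∀ k : ℕ, 0 ≤ a (k + 1) - a k + α (a k)) :
    ∀ k : ℕ, 0 ≤ a k := by
  intro k
  induction k with
  | zero => exact ha0
  | succ n ih =>
    have h := hstep n
    rcases eq_or_lt_of_le ih with he | hpos
    · rw [← he, h0] at h; linarith [h0, he]
    · have := hlt (a n) hpos
      linarith
end

section
/- Let ρ ≥ 1 be an integer and, for each j ∈ {1,…,ρ}, let α_j : ℝ → ℝ be strictly increasing with α_j(0) = 0 and α_j(r) < r for all r > 0. Let ψ_0, ψ_1, …, ψ_ρ : ℕ → ℝ be sequences satisfying, for each j ∈ {1,…,ρ} and each k ≥ 0, ψ_j(k) = ψ_{j−1}(k+1) − ψ_{j−1}(k) + α_j(ψ_{j−1}(k)). Suppose ψ_j(0) ≥ 0 for every j ∈ {0,…,ρ−1}, and ψ_ρ(k) ≥ 0 for every k ≥ 0. Then ψ_j(k) ≥ 0 for every j ∈ {0,…,ρ−1} and every k ≥ 0; in particular ψ_0(k) ≥ 0 for all k. -/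
theorem dtcbf_high_relative_degree_invariance
    (ρ : ℕ) (hρ : 1 ≤ ρ)
    (α : ℕ → ℝ → ℝ)
    (hmono : ∀ j : ℕ, 1 ≤ j → j ≤ ρ → StrictMono (α j))
    (hzero : ∀ j : ℕ, 1 ≤ j → j ≤ ρ → α j 0 = 0)
    (hlt : ∀ j : ℕ, 1 ≤ j → j ≤ ρ → ∀ r : ℝ, 0 < r → α j r < r)
    (ψ : ℕ → ℕ → ℝ)
    (hchain : ∀ j : ℕ, 1 ≤ j → j ≤ ρ → ∀ k : ℕ,
      ψ j k = ψ (j - 1) (k + 1) - ψ (j - 1) k + α j (ψ (j - 1) k))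
    (hinit : ∀ j : ℕ, j ≤ ρ - 1 → 0 ≤ ψ j 0)
    (htop : ∀ k : ℕ, 0 ≤ ψ ρ k) :
    (∀ j : ℕ, j ≤ ρ - 1 → ∀ k : ℕ, 0 ≤ ψ j k) ∧ (∀ k : ℕ, 0 ≤ ψ 0 k) := by
  have key : ∀ d j : ℕ, j + d = ρ → ∀ k : ℕ, 0 ≤ ψ j k := by
    intro d
    induction d with
    | zero => intro j hj k; simpa [← hj] using htop k
    | succ d ih =>
      intro j hj k
      have hj1 : (j + 1) + d = ρ := by omega
      have h1 : 1 ≤ j + 1 := le_refl _ |>.trans (by omega)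
      have h2 : j + 1 ≤ ρ := by omega
      have hnext : ∀ k, 0 ≤ ψ (j + 1) k := ih (j + 1) hj1
      induction k with
      | zero => exact hinit j (by omega)
      | succ k ihk =>
        have hc := hchain (j + 1) h1 h2 k
        simp only [Nat.add_sub_cancel] at hc
        have hstep : ψ j (k + 1) = ψ (j + 1) k + (ψ j k - α (j + 1) (ψ j k)) := by
          linarith [hc]
        have hra : 0 ≤ ψ j k - α (j + 1) (ψ j k) := by
          rcases lt_or_eq_of_le ihk with hpos | heq
          · linarith [hlt (j + 1) h1 h2 (ψ j k) hpos]
          · rw [← heq, hzero (j + 1) h1 h2]; simp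
        rw [hstep]
        have := hnext k
        linarith
  have main : ∀ j : ℕ, j ≤ ρ - 1 → ∀ k : ℕ, 0 ≤ ψ j k := by
    intro j hj k
    exact key (ρ - j) j (by omega) k
  exact ⟨main, fun k => main 0 (by omega) k⟩
end

section
/- Let n, m, p be positive integers, A a real n×n matrix, B a real n×m matrix, C a real p×n matrix, and ρ ≥ 1 an integer such that C·A^q·B = 0 for all integers q with 0 ≤ q ≤ ρ−2. Let ℓ ≥ 1 and set A_ℓ := A^ℓ, B_ℓ := (Σ_{i=0}^{ℓ−1} A^i)·B. Then for every integer j ≥ 1 with jℓ ≤ ρ−1, the subsampled Markov parameter vanishes: C·A_ℓ^{j−1}·B_ℓ = 0. -/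
theorem subsampled_markov_parameter_vanishes
    (n m p : ℕ) (hn : 0 < n) (hm : 0 < m) (hp : 0 < p)
    (A : Matrix (Fin n) (Fin n) ℝ) (B : Matrix (Fin n) (Fin m) ℝ)
    (C : Matrix (Fin p) (Fin n) ℝ)
    (ρ : ℕ) (hρ : 1 ≤ ρ)
    (hvanish : ∀ q : ℕ, q + 2 ≤ ρ → C * A ^ q * B = 0)
    (ℓ : ℕ) (hℓ : 1 ≤ ℓ)
    (Aℓ : Matrix (Fin n) (Fin n) ℝ) (hAℓ : Aℓ = A ^ ℓ)
    (Bℓ : Matrix (Fin n) (Fin m) ℝ) (hBℓ : Bℓ = (∑ i ∈ Finset.range ℓ, A ^ i) * B) :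
    ∀ j : ℕ, 1 ≤ j → j * ℓ ≤ ρ - 1 → C * Aℓ ^ (j - 1) * Bℓ = 0 := by
  intro j hj hjl
  subst hAℓ hBℓ
  rw [← pow_mul]
  have key : C * A ^ (ℓ * (j - 1)) * (∑ i ∈ Finset.range ℓ, A ^ i) * B
      = ∑ i ∈ Finset.range ℓ, C * A ^ (ℓ * (j - 1) + i) * B := by
    rw [Matrix.mul_sum, Matrix.sum_mul]
    refine Finset.sum_congr rfl fun i _ => ?_
    simp [pow_add, Matrix.mul_assoc]
  rw [← Matrix.mul_assoc, key]
  refine Finset.sum_eq_zero fun i hi => hvanish _ ?_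
  have hi' : i + 1 ≤ ℓ := Finset.mem_range.mp hi
  have h1 : ℓ * (j - 1) + ℓ = j * ℓ := by
    calc ℓ * (j - 1) + ℓ = ℓ * (j - 1 + 1) := by ring
    _ = j * ℓ := by rw [Nat.sub_add_cancel hj, Nat.mul_comm]
  omega
end

section
/- Let n, m, p be positive integers, A a real n×n matrix, B a real n×m matrix, C a real p×n matrix, and ρ ≥ 1 an integer such that C·A^q·B = 0 for all 0 ≤ q ≤ ρ−2 and C·A^{ρ−1}·B ≠ 0. Let ℓ ≥ 1 divide ρ and set r := ρ/ℓ, A_ℓ := A^ℓ, B_ℓ := (Σ_{i=0}^{ℓ−1} A^i)·B. Then C·A_ℓ^{j−1}·B_ℓ = 0 for every integer j with 1 ≤ j < r, and C·A_ℓ^{r−1}·B_ℓ = C·A^{ρ−1}·B ≠ 0. In particular, when ℓ = ρ the subsampled system has C·B_ℓ = C·A^{ρ−1}·B ≠ 0, i.e., relative degree one. -/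
theorem subsampled_relative_degree_exact_division
    (n m p : ℕ) (hn : 0 < n) (hm : 0 < m) (hp : 0 < p)
    (A : Matrix (Fin n) (Fin n) ℝ) (B : Matrix (Fin n) (Fin m) ℝ)
    (C : Matrix (Fin p) (Fin n) ℝ)
    (ρ : ℕ) (hρ : 1 ≤ ρ)
    (hvanish : ∀ q : ℕ, q + 2 ≤ ρ → C * A ^ q * B = 0)
    (hnonzero : C * A ^ (ρ - 1) * B ≠ 0)
    (ℓ : ℕ) (hℓ : 1 ≤ ℓ) (hdvd : ℓ ∣ ρ)
    (r : ℕ) (hr : r = ρ / ℓ)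
    (Aℓ : Matrix (Fin n) (Fin n) ℝ) (hAℓ : Aℓ = A ^ ℓ)
    (Bℓ : Matrix (Fin n) (Fin m) ℝ) (hBℓ : Bℓ = (∑ i ∈ Finset.range ℓ, A ^ i) * B) :
    (∀ j : ℕ, 1 ≤ j → j < r → C * Aℓ ^ (j - 1) * Bℓ = 0) ∧
      C * Aℓ ^ (r - 1) * Bℓ = C * A ^ (ρ - 1) * B ∧
      C * Aℓ ^ (r - 1) * Bℓ ≠ 0 ∧
      (ℓ = ρ → C * Bℓ = C * A ^ (ρ - 1) * B ∧ C * Bℓ ≠ 0) := by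
  have hρℓ : ρ = ℓ * r := by
    rw [hr]; exact (Nat.mul_div_cancel' hdvd).symm
  have hrpos : 1 ≤ r := by
    rcases Nat.eq_zero_or_pos r with h | h
    · subst h; simp at hρℓ; omega
    · exact h
  obtain ⟨t, rfl⟩ : ∃ t, ℓ = t + 1 := ⟨ℓ - 1, by omega⟩
  -- expansion lemma
  have key : ∀ k : ℕ, C * Aℓ ^ k * Bℓ
      = ∑ i ∈ Finset.range (t + 1), C * A ^ ((t + 1) * k + i) * B := by
    intro k
    rw [hAℓ, hBℓ, ← pow_mul, Matrix.sum_mul, Matrix.mul_sum]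
    apply Finset.sum_congr rfl
    intro i _
    rw [pow_add]
    simp only [Matrix.mul_assoc]
  -- vanish part
  have hvan : ∀ j : ℕ, 1 ≤ j → j < r → C * Aℓ ^ (j - 1) * Bℓ = 0 := by
    intro j hj1 hjr
    rw [key]
    apply Finset.sum_eq_zero
    intro i hi
    simp only [Finset.mem_range] at hi
    apply hvanish
    have h1 : (t + 1) * j = (t + 1) * (j - 1) + (t + 1) := by
      rw [← Nat.mul_succ]; congr 1; omega
    have h2 : (t + 1) * j ≤ (t + 1) * (r - 1) := Nat.mul_le_mul_left _ (by omega)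
    have h3 : (t + 1) * r = (t + 1) * (r - 1) + (t + 1) := by
      rw [← Nat.mul_succ]; congr 1; omega
    omega
  -- top part
  have htop : C * Aℓ ^ (r - 1) * Bℓ = C * A ^ (ρ - 1) * B := by
    rw [key, Finset.sum_range_succ]
    have hmul : (t + 1) * r = (t + 1) * (r - 1) + (t + 1) := by
      rw [← Nat.mul_succ]; congr 1; omega
    have hzero : ∑ i ∈ Finset.range t, C * A ^ ((t + 1) * (r - 1) + i) * B = 0 := by
      apply Finset.sum_eq_zero
      intro i hi
      simp only [Finset.mem_range] at hi
      apply hvanish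
      omega
    rw [hzero, zero_add]
    have : (t + 1) * (r - 1) + t = ρ - 1 := by omega
    rw [this]
  refine ⟨hvan, htop, htop ▸ hnonzero, ?_⟩
  intro hlρ
  have hr1 : r = 1 := by
    rw [hr, ← hlρ, Nat.div_self (by omega)]
  have h := htop
  rw [hr1] at h
  simp only [Nat.sub_self, pow_zero, Matrix.mul_one] at h
  exact ⟨h, h ▸ hnonzero⟩
end

section
/- Let n, m, p be positive integers, A_cbf a real p×n matrix, b_cbf ∈ ℝ^p, γ ∈ (0,1), A_ℓ a real n×n matrix, B_ℓ a real n×m matrix, and h(x) := A_cbf·x + b_cbf. Let (χ_k) in ℝ^n and (v_k) in ℝ^m satisfy χ_{k+1} = A_ℓ·χ_k + B_ℓ·v_k for all k ≥ 0, suppose every component of h(χ_0) is nonnegative, and suppose that for every k ≥ 0 the predictive CBF filter constraint A_cbf·B_ℓ·v_k ≥ A_cbf·(γ·I_n − A_ℓ)·χ_k − (1−γ)·b_cbf holds componentwise. Then for every k ≥ 0, every component of h(χ_k) is nonnegative, i.e., χ_k remains in the polytopic safe set { x ∈ ℝ^n : A_cbf·x + b_cbf ≥ 0 }. -/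
theorem pcbf_safety_guarantee
    (n m p : ℕ) (hn : 0 < n) (hm : 0 < m) (hp : 0 < p)
    (Acbf : Matrix (Fin p) (Fin n) ℝ) (bcbf : Fin p → ℝ)
    (γ : ℝ) (hγ : γ ∈ Set.Ioo (0 : ℝ) 1)
    (Aℓ : Matrix (Fin n) (Fin n) ℝ) (Bℓ : Matrix (Fin n) (Fin m) ℝ)
    (h : (Fin n → ℝ) → Fin p → ℝ)
    (hdef : ∀ x : Fin n → ℝ, h x = Acbf.mulVec x + bcbf)
    (χ : ℕ → Fin n → ℝ) (v : ℕ → Fin m → ℝ)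
    (hdyn : ∀ k : ℕ, χ (k + 1) = Aℓ.mulVec (χ k) + Bℓ.mulVec (v k))
    (h0 : ∀ i : Fin p, 0 ≤ h (χ 0) i)
    (hfilter : ∀ k : ℕ, ∀ i : Fin p,
      ((Acbf * (γ • (1 : Matrix (Fin n) (Fin n) ℝ) - Aℓ)).mulVec (χ k)
        - (1 - γ) • bcbf) i ≤ ((Acbf * Bℓ).mulVec (v k)) i) :
    ∀ k : ℕ, χ k ∈ {x : Fin n → ℝ | ∀ i : Fin p, 0 ≤ (Acbf.mulVec x + bcbf) i} := by
  intro k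
  induction k with
  | zero =>
      intro i
      have := h0 i
      rw [hdef] at this
      exact this
  | succ k ih =>
      intro i
      have key := hfilter k i
      have hexp : (Acbf * (γ • (1 : Matrix (Fin n) (Fin n) ℝ) - Aℓ)).mulVec (χ k)
          = γ • Acbf.mulVec (χ k) - Acbf.mulVec (Aℓ.mulVec (χ k)) := by
        rw [← Matrix.mulVec_mulVec, Matrix.sub_mulVec, Matrix.smul_mulVec,
          Matrix.one_mulVec, Matrix.mulVec_sub, Matrix.mulVec_smul]
      have hB : (Acbf * Bℓ).mulVec (v k) = Acbf.mulVec (Bℓ.mulVec (v k)) := by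
        rw [Matrix.mulVec_mulVec]
      rw [hexp, hB] at key
      have ihi := ih i
      simp only [Set.mem_setOf_eq, Pi.add_apply] at ihi ⊢
      rw [hdyn k, Matrix.mulVec_add]
      simp only [Pi.add_apply, Pi.sub_apply, Pi.smul_apply, smul_eq_mul] at key ⊢
      nlinarith [hγ.1, hγ.2, ihi]
end
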